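/- arXiv:2404.14864 — 5 statements merged into one kernel-verified Lean document; each statement's English description precedes it below -/
import Mathlib

section
/- Let θ ≥ 1/4 and μ > 0 be real numbers. Then every complex root r of the quadratic polynomial (1 + θμ)·z² − (2 − (1 − 2θ)μ)·z + (1 + θμ) satisfies |r| = 1 and has nonzero imaginary part; in particular the polynomial has two distinct complex-conjugate roots on the unit circle. -/
/-! With `a = 1 + θμ` and `b = 2 − (1 − 2θ)μ` one has `2a − b = μ > 0` and
`2a + b = 4 + (4θ − 1)μ > 0`, so `|b| < 2a`: the palindromic quadratic `a z² − b z + a` has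
negative discriminant `b² − 4a²`, hence no real root. A non-real root `r` is distinct from its
conjugate, which is also a root since the coefficients are real, so the product of the roots
gives `r · conj r = 1`. -/

open ComplexConjugate

section PalindromicQuadratic

variable {a b : ℝ}

theorem conj_root_of_real_coeffs {r : ℂ} (hr : (a : ℂ) * r ^ 2 - (b : ℂ) * r + a = 0) :
    (a : ℂ) * conj r ^ 2 - (b : ℂ) * conj r + a = 0 := by
  simpa only [map_add, map_sub, map_mul, map_pow, Complex.conj_ofReal, map_zero]
    using congrArg conj hr

theorem pos_of_abs_lt_two_mul (hab : |b| < 2 * a) : 0 < a := by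
  linarith [abs_nonneg b]

theorem palindromic_quadratic_pos (hab : |b| < 2 * a) (x : ℝ) : 0 < a * x ^ 2 - b * x + a := by
  obtain ⟨hb₁, hb₂⟩ := abs_lt.mp hab
  have hdisc : 0 < (2 * a - b) * (2 * a + b) := mul_pos (by linarith) (by linarith)
  have hsq : 4 * a * (a * x ^ 2 - b * x + a) = (2 * a * x - b) ^ 2 + (2 * a - b) * (2 * a + b) := by
    ring
  have : 0 < 4 * a * (a * x ^ 2 - b * x + a) := hsq ▸ add_pos_of_nonneg_of_pos (sq_nonneg _) hdisc
  exact pos_of_mul_pos_right this (by linarith [pos_of_abs_lt_two_mul hab])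

theorem im_ne_zero_of_palindromic_root (hab : |b| < 2 * a) {r : ℂ}
    (hr : (a : ℂ) * r ^ 2 - (b : ℂ) * r + a = 0) : r.im ≠ 0 := by
  intro him
  have hreal : a * r.re ^ 2 - b * r.re + a = 0 := by
    rw [← Complex.re_add_im r, him] at hr
    exact_mod_cast (by simpa using hr : (a : ℂ) * r.re ^ 2 - b * r.re + a = 0)
  exact (palindromic_quadratic_pos hab r.re).ne' hreal

theorem norm_eq_one_of_palindromic_root (hab : |b| < 2 * a) {r : ℂ}
    (hr : (a : ℂ) * r ^ 2 - (b : ℂ) * r + a = 0) : ‖r‖ = 1 := by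
  have ha : (a : ℂ) ≠ 0 := by exact_mod_cast (pos_of_abs_lt_two_mul hab).ne'
  have hc := conj_root_of_real_coeffs hr
  have hne : r - conj r ≠ 0 := by
    rw [Complex.sub_conj]
    simpa [Complex.ext_iff] using im_ne_zero_of_palindromic_root hab hr
  have hsum : (a : ℂ) * (r + conj r) = b := by
    have : (r - conj r) * ((a : ℂ) * (r + conj r) - b) = 0 := by linear_combination hr - hc
    exact sub_eq_zero.1 ((mul_eq_zero.1 this).resolve_left hne)
  have hprod : r * conj r = 1 := by
    have : (a : ℂ) * (r * conj r - 1) = 0 := by linear_combination r * hsum - hr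
    exact sub_eq_zero.1 ((mul_eq_zero.1 this).resolve_left ha)
  have : ‖r‖ ^ 2 = 1 := by exact_mod_cast Complex.mul_conj' r ▸ hprod
  exact (pow_eq_one_iff_of_nonneg (norm_nonneg r) two_ne_zero).1 this

theorem exists_palindromic_root (hab : |b| < 2 * a) :
    ∃ r : ℂ, (a : ℂ) * r ^ 2 - (b : ℂ) * r + a = 0 := by
  have ha : (a : ℂ) ≠ 0 := by exact_mod_cast (pos_of_abs_lt_two_mul hab).ne'
  obtain ⟨r, hr⟩ := exists_quadratic_eq_zero (b := -(b : ℂ)) (c := a) ha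
    (IsAlgClosed.exists_eq_mul_self _)
  exact ⟨r, by linear_combination hr⟩

end PalindromicQuadratic

/-- Unconditional stability of the implicit θ-scheme for the wave equation, θ ≥ 1/4:
every complex root of the characteristic polynomial
`(1+θμ)z² − (2−(1−2θ)μ)z + (1+θμ)` lies on the unit circle and has nonzero
imaginary part; in particular the polynomial has two distinct complex-conjugate
roots on the unit circle. -/
theorem stmt8 (θ μ : ℝ) (hθ : 1 / 4 ≤ θ) (hμ : 0 < μ) :
    (∀ r : ℂ,
      ((1 + θ * μ : ℝ) : ℂ) * r ^ 2 - ((2 - (1 - 2 * θ) * μ : ℝ) : ℂ) * r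
        + ((1 + θ * μ : ℝ) : ℂ) = 0 →
      ‖r‖ = 1 ∧ r.im ≠ 0) ∧
    ∃ r : ℂ,
      (((1 + θ * μ : ℝ) : ℂ) * r ^ 2 - ((2 - (1 - 2 * θ) * μ : ℝ) : ℂ) * r
          + ((1 + θ * μ : ℝ) : ℂ) = 0) ∧
      (((1 + θ * μ : ℝ) : ℂ) * (starRingEnd ℂ r) ^ 2
          - ((2 - (1 - 2 * θ) * μ : ℝ) : ℂ) * (starRingEnd ℂ r)
          + ((1 + θ * μ : ℝ) : ℂ) = 0) ∧
      r ≠ starRingEnd ℂ r ∧ ‖r‖ = 1 := by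
  have hab : |2 - (1 - 2 * θ) * μ| < 2 * (1 + θ * μ) := by
    rw [abs_lt]; constructor <;> nlinarith
  refine ⟨fun r hr => ⟨norm_eq_one_of_palindromic_root hab hr,
    im_ne_zero_of_palindromic_root hab hr⟩, ?_⟩
  obtain ⟨r, hr⟩ := exists_palindromic_root hab
  refine ⟨r, hr, conj_root_of_real_coeffs hr, fun h => ?_,
    norm_eq_one_of_palindromic_root hab hr⟩
  exact im_ne_zero_of_palindromic_root hab hr (Complex.conj_eq_iff_im.1 h.symm)
end

section
/- Let θ ≥ 1/4 and μ > 0 be real numbers, and let (a_n)_{n≥0} be a sequence of real numbers satisfying the linear recurrence (1 + θμ)·a_{n+1} = (2 − (1 − 2θ)μ)·a_n − (1 + θμ)·a_{n−1} for all n ≥ 1. Then the sequence (a_n) is bounded: there exists M > 0 such that |a_n| ≤ M for all n. -/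
/-- Unconditional stability of the implicit θ-scheme for the wave equation:
for θ ≥ 1/4 and μ > 0, every real sequence satisfying the recurrence
`(1+θμ)·a_{n+1} = (2−(1−2θ)μ)·a_n − (1+θμ)·a_{n−1}` (n ≥ 1) is bounded. -/
theorem stmt9 (θ μ : ℝ) (hθ : 1 / 4 ≤ θ) (hμ : 0 < μ) (a : ℕ → ℝ)
    (hrec : ∀ n : ℕ, 1 ≤ n →
      (1 + θ * μ) * a (n + 1) = (2 - (1 - 2 * θ) * μ) * a n - (1 + θ * μ) * a (n - 1)) :
    ∃ M : ℝ, 0 < M ∧ ∀ n : ℕ, |a n| ≤ M := by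
  have h1 : (0:ℝ) < 1 + θ * μ := by nlinarith
  set c : ℝ := (2 - (1 - 2 * θ) * μ) / (1 + θ * μ) with hc_def
  have hc2 : c ^ 2 < 4 := by
    rw [hc_def, div_pow, div_lt_iff₀ (by positivity)]
    have key : 0 < μ * (4 + (4 * θ - 1) * μ) := mul_pos hμ (by nlinarith)
    nlinarith [key]
  have hrec' : ∀ n : ℕ, a (n + 2) = c * a (n + 1) - a n := by
    intro n
    have h := hrec (n + 1) (by omega)
    simp only [Nat.add_sub_cancel] at h
    have h2 : (1 + θ * μ) * a (n + 2) = (2 - (1 - 2 * θ) * μ) * a (n + 1) - (1 + θ * μ) * a n := by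
      exact h
    rw [hc_def]
    field_simp
    linarith
  have hEconst : ∀ n, a (n + 1) ^ 2 - c * a (n + 1) * a n + a n ^ 2
      = a 1 ^ 2 - c * a 1 * a 0 + a 0 ^ 2 := by
    intro n
    induction n with
    | zero => rfl
    | succ k ih =>
      rw [← ih]
      have h : a (k + 1 + 1) = c * a (k + 1) - a k := hrec' k
      rw [h]
      ring
  set E0 : ℝ := a 1 ^ 2 - c * a 1 * a 0 + a 0 ^ 2 with hE0def
  have hδpos : (0:ℝ) < 1 - c ^ 2 / 4 := by nlinarith
  have hlow : ∀ n, (1 - c ^ 2 / 4) * (a n) ^ 2 ≤ E0 := by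
    intro n
    rw [← hEconst n]
    nlinarith [sq_nonneg (a (n + 1) - c / 2 * a n)]
  have hE0 : 0 ≤ E0 := le_trans (by positivity) (hlow 0)
  refine ⟨Real.sqrt (E0 / (1 - c ^ 2 / 4)) + 1, by positivity, fun n => ?_⟩
  have h : (a n) ^ 2 ≤ E0 / (1 - c ^ 2 / 4) := by
    rw [le_div_iff₀ hδpos]; nlinarith [hlow n]
  calc |a n| = Real.sqrt ((a n) ^ 2) := (Real.sqrt_sq_eq_abs _).symm
    _ ≤ Real.sqrt (E0 / (1 - c ^ 2 / 4)) := Real.sqrt_le_sqrt h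
    _ ≤ Real.sqrt (E0 / (1 - c ^ 2 / 4)) + 1 := by linarith
end

section
/- Let g : ℝ → ℝ be four times continuously differentiable, let t ∈ ℝ, τ > 0, θ ∈ ℝ with 0 ≤ θ ≤ 1/2, and suppose |g''''(s)| ≤ M for all s ∈ [t − τ, t + τ]. Then |(g(t + τ) − 2g(t) + g(t − τ))/τ² − (θ·g''(t + τ) + (1 − 2θ)·g''(t) + θ·g''(t − τ))| ≤ (1/12 + θ)·M·τ². -/
/-!
Expanding symmetrically about `t` cancels the odd-order Taylor terms. To fourth order for `g`,
`g(t+τ) - 2g(t) + g(t-τ) = τ²g''(t) + τ⁴/24 (g⁗(ξ₁) + g⁗(η₁))`, and to second order for `g''`,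
`g''(t+τ) + g''(t-τ) = 2g''(t) + τ²/2 (g⁗(ξ₂) + g⁗(η₂))`, with all four points in `[t-τ, t+τ]`.
The residual is therefore `τ²/24 (g⁗(ξ₁) + g⁗(η₁)) - θτ²/2 (g⁗(ξ₂) + g⁗(η₂))`, and each bracket
is at most `2M` in absolute value.
-/

open Set Finset Nat

theorem taylor_mean_remainder_lagrange_of_contDiff {f : ℝ → ℝ} {n : ℕ}
    (hf : ContDiff ℝ (n + 1) f) {x₀ x : ℝ} (hx : x₀ ≠ x) :
    ∃ ξ ∈ uIoo x₀ x, f x = ∑ k ∈ range (n + 1), iteratedDeriv k f x₀ * (x - x₀) ^ k / k ! +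
      iteratedDeriv (n + 1) f ξ * (x - x₀) ^ (n + 1) / (n + 1)! := by
  obtain ⟨ξ, hξ, h⟩ := taylor_mean_remainder_lagrange_iteratedDeriv hx hf.contDiffOn
  refine ⟨ξ, hξ, ?_⟩
  have hterm (k : ℕ) (hk : k ∈ range (n + 1)) :
      ((k ! : ℝ)⁻¹ * (x - x₀) ^ k) • iteratedDerivWithin k f (uIcc x₀ x) x₀ =
        iteratedDeriv k f x₀ * (x - x₀) ^ k / k ! := by
    rw [iteratedDerivWithin_eq_iteratedDeriv (uniqueDiffOn_uIcc hx)
      ((hf.of_le (by exact_mod_cast (mem_range.mp hk).le)).contDiffAt) left_mem_uIcc,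
      smul_eq_mul]
    ring
  rw [taylor_within_apply, sum_congr rfl hterm] at h
  rw [← h, add_sub_cancel]

theorem taylor_mean_remainder_lagrange_add_add_sub {f : ℝ → ℝ} {n : ℕ}
    (hf : ContDiff ℝ (n + 1) f) (t : ℝ) {τ : ℝ} (hτ : 0 < τ) :
    ∃ ξ ∈ Ioo t (t + τ), ∃ η ∈ Ioo (t - τ) t, f (t + τ) + f (t - τ) =
      ∑ k ∈ range (n + 1), iteratedDeriv k f t * (τ ^ k + (-τ) ^ k) / k ! +
        (iteratedDeriv (n + 1) f ξ * τ ^ (n + 1) + iteratedDeriv (n + 1) f η * (-τ) ^ (n + 1)) /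
          (n + 1)! := by
  obtain ⟨ξ, hξ, hfwd⟩ :=
    taylor_mean_remainder_lagrange_of_contDiff hf (x₀ := t) (x := t + τ) (by linarith)
  obtain ⟨η, hη, hbwd⟩ :=
    taylor_mean_remainder_lagrange_of_contDiff hf (x₀ := t) (x := t - τ) (by linarith)
  rw [uIoo_of_lt (by linarith)] at hξ
  rw [uIoo_of_gt (by linarith)] at hη
  refine ⟨ξ, hξ, η, hη, ?_⟩
  rw [hfwd, hbwd, add_sub_cancel_left, sub_sub_cancel_left]
  simp only [mul_add, add_div, sum_add_distrib]
  ring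

theorem iteratedDeriv_iteratedDeriv {f : ℝ → ℝ} (m n : ℕ) :
    iteratedDeriv m (iteratedDeriv n f) = iteratedDeriv (m + n) f := by
  simp only [iteratedDeriv_eq_iterate, Function.iterate_add_apply]

theorem exists_add_add_sub_eq_of_contDiff_four {g : ℝ → ℝ} (hg : ContDiff ℝ 4 g) (t : ℝ)
    {τ : ℝ} (hτ : 0 < τ) :
    ∃ ξ ∈ Ioo t (t + τ), ∃ η ∈ Ioo (t - τ) t, g (t + τ) + g (t - τ) =
      2 * g t + τ ^ 2 * iteratedDeriv 2 g t +
        τ ^ 4 / 24 * (iteratedDeriv 4 g ξ + iteratedDeriv 4 g η) := by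
  obtain ⟨ξ, hξ, η, hη, h⟩ := taylor_mean_remainder_lagrange_add_add_sub (n := 3) hg t hτ
  refine ⟨ξ, hξ, η, hη, ?_⟩
  rw [h]
  simp only [sum_range_succ, sum_range_zero, iteratedDeriv_zero, factorial]
  push_cast
  ring

theorem exists_iteratedDeriv_two_add_add_sub_eq {g : ℝ → ℝ} (hg : ContDiff ℝ 4 g) (t : ℝ)
    {τ : ℝ} (hτ : 0 < τ) :
    ∃ ξ ∈ Ioo t (t + τ), ∃ η ∈ Ioo (t - τ) t,
      iteratedDeriv 2 g (t + τ) + iteratedDeriv 2 g (t - τ) =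
        2 * iteratedDeriv 2 g t + τ ^ 2 / 2 * (iteratedDeriv 4 g ξ + iteratedDeriv 4 g η) := by
  have hg₂ : ContDiff ℝ (1 + 1) (iteratedDeriv 2 g) := by
    rw [iteratedDeriv_eq_iterate]
    exact hg.iterate_deriv' 2 2
  obtain ⟨ξ, hξ, η, hη, h⟩ := taylor_mean_remainder_lagrange_add_add_sub hg₂ t hτ
  refine ⟨ξ, hξ, η, hη, ?_⟩
  rw [h]
  simp only [sum_range_succ, sum_range_one, iteratedDeriv_iteratedDeriv, factorial]
  push_cast
  ring

theorem stmt12_general (g : ℝ → ℝ) (hg : ContDiff ℝ 4 g) (t τ θ M : ℝ) (hτ : 0 < τ)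
    (hθ0 : 0 ≤ θ)
    (hM : ∀ s ∈ Set.Icc (t - τ) (t + τ), |iteratedDeriv 4 g s| ≤ M) :
    |(g (t + τ) - 2 * g t + g (t - τ)) / τ ^ 2 -
        (θ * iteratedDeriv 2 g (t + τ) + (1 - 2 * θ) * iteratedDeriv 2 g t +
          θ * iteratedDeriv 2 g (t - τ))| ≤ (1 / 12 + θ) * M * τ ^ 2 := by
  obtain ⟨ξ₁, hξ₁, η₁, hη₁, hg₀⟩ := exists_add_add_sub_eq_of_contDiff_four hg t hτ
  obtain ⟨ξ₂, hξ₂, η₂, hη₂, hg₂⟩ := exists_iteratedDeriv_two_add_add_sub_eq hg t hτ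
  have quotient_eq : (g (t + τ) - 2 * g t + g (t - τ)) / τ ^ 2 =
      iteratedDeriv 2 g t + τ ^ 2 / 24 * (iteratedDeriv 4 g ξ₁ + iteratedDeriv 4 g η₁) := by
    rw [div_eq_iff (by positivity)]
    linear_combination hg₀
  have residual_eq : (g (t + τ) - 2 * g t + g (t - τ)) / τ ^ 2 -
      (θ * iteratedDeriv 2 g (t + τ) + (1 - 2 * θ) * iteratedDeriv 2 g t +
        θ * iteratedDeriv 2 g (t - τ)) =
      τ ^ 2 / 24 * (iteratedDeriv 4 g ξ₁ + iteratedDeriv 4 g η₁) -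
        θ * τ ^ 2 / 2 * (iteratedDeriv 4 g ξ₂ + iteratedDeriv 4 g η₂) := by
    rw [quotient_eq]
    linear_combination -θ * hg₂
  have bound (s : ℝ) (hs₁ : t - τ < s) (hs₂ : s < t + τ) := abs_le.mp (hM s ⟨hs₁.le, hs₂.le⟩)
  obtain ⟨hA₁, hA₂⟩ := bound ξ₁ (by linarith [hξ₁.1]) hξ₁.2
  obtain ⟨hB₁, hB₂⟩ := bound η₁ hη₁.1 (by linarith [hη₁.2])
  obtain ⟨hC₁, hC₂⟩ := bound ξ₂ (by linarith [hξ₂.1]) hξ₂.2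
  obtain ⟨hD₁, hD₂⟩ := bound η₂ hη₂.1 (by linarith [hη₂.2])
  have hτ₂ : 0 ≤ τ ^ 2 := sq_nonneg τ
  have hθτ : 0 ≤ θ * τ ^ 2 := mul_nonneg hθ0 hτ₂
  rw [residual_eq, abs_le]
  constructor <;> nlinarith

/-- Second-order local consistency of the implicit θ-scheme for the wave equation:
if `g` is C⁴ with `|g''''| ≤ M` on `[t−τ, t+τ]` and `0 ≤ θ ≤ 1/2`, then the residual
`(g(t+τ) − 2g(t) + g(t−τ))/τ² − (θg''(t+τ) + (1−2θ)g''(t) + θg''(t−τ))`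
is bounded by `(1/12 + θ)·M·τ²`. -/
theorem stmt12 (g : ℝ → ℝ) (hg : ContDiff ℝ 4 g) (t τ θ M : ℝ) (hτ : 0 < τ)
    (hθ0 : 0 ≤ θ) (hθ1 : θ ≤ 1 / 2)
    (hM : ∀ s ∈ Set.Icc (t - τ) (t + τ), |iteratedDeriv 4 g s| ≤ M) :
    |(g (t + τ) - 2 * g t + g (t - τ)) / τ ^ 2 -
        (θ * iteratedDeriv 2 g (t + τ) + (1 - 2 * θ) * iteratedDeriv 2 g t +
          θ * iteratedDeriv 2 g (t - τ))| ≤ (1 / 12 + θ) * M * τ ^ 2 :=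
  stmt12_general g hg t τ θ M hτ hθ0 hM
end

section
/- Let ξ ∈ ℝ and let u⁺, u⁻ : ℝ → ℝ be three times continuously differentiable functions. Define the jumps [u] = u⁺(ξ) − u⁻(ξ), [u'] = (u⁺)'(ξ) − (u⁻)'(ξ), and [u''] = (u⁺)''(ξ) − (u⁻)''(ξ). Then there exist constants C > 0 and h₀ > 0 such that for all h ∈ (0, h₀] and all x ∈ [ξ − 1, ξ] with ξ < x + h, one has |(u⁻(x + h) + u⁺(x − h) − 2·u⁺(x))/h² + (1/h²)·([u] + [u']·(x + h − ξ) + (1/2)·[u'']·(x + h − ξ)²) − (u⁺)''(x)| ≤ C·h. -/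
/-!
Expand `up` to second order at `x` and the two one-sided functions to second order at `ξ`.
The jump terms are exactly the difference of the Taylor polynomials of `up` and `um` at `ξ`
evaluated at `x + h`, so the corrected quotient differs from `up''(x)` by four Taylor
remainders divided by `h²`. Each remainder is `O(h³)` uniformly, since `|x ± h - x| = h` and
`0 < x + h - ξ ≤ h`, and the third derivatives are bounded on a fixed compact interval.
-/

open Set

noncomputable def taylorTwoRemainder (f : ℝ → ℝ) (x₀ x : ℝ) : ℝ :=
  f x - f x₀ - deriv f x₀ * (x - x₀) - deriv (deriv f) x₀ * (x - x₀) ^ 2 / 2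

lemma hasDerivAt_taylorTwoRemainder_base {f : ℝ → ℝ} (hf : ContDiff ℝ 3 f) (x t : ℝ) :
    HasDerivAt (fun x₀ => taylorTwoRemainder f x₀ x)
      (-(iteratedDeriv 3 f t * (x - t) ^ 2 / 2)) t := by
  have hd : ∀ m < 3, HasDerivAt (iteratedDeriv m f) (iteratedDeriv (m + 1) f t) t :=
    fun m hm => iteratedDeriv_succ (f := f) ▸
      (hf.differentiable_iteratedDeriv m (by exact_mod_cast hm) t).hasDerivAt
  have h0 := hd 0 (by norm_num)
  have h1 := hd 1 (by norm_num)
  have h2 := hd 2 (by norm_num)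
  simp only [iteratedDeriv_zero, zero_add, iteratedDeriv_succ] at h0 h1 h2 ⊢
  have hxt : HasDerivAt (fun t : ℝ => x - t) (-1) t := (hasDerivAt_id t).const_sub x
  unfold taylorTwoRemainder
  exact (((h0.const_sub (f x)).sub (h1.mul hxt)).sub ((h2.mul (hxt.pow 2)).div_const 2)).congr_deriv
    (by simp; ring)

lemma abs_taylorTwoRemainder_le {f : ℝ → ℝ} (hf : ContDiff ℝ 3 f) {M x₀ x : ℝ}
    (hM : ∀ t ∈ uIcc x₀ x, |iteratedDeriv 3 f t| ≤ M) :
    |taylorTwoRemainder f x₀ x| ≤ M / 2 * |x - x₀| ^ 3 := by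
  have hderiv_le : ∀ t ∈ uIcc x₀ x,
      ‖-(iteratedDeriv 3 f t * (x - t) ^ 2 / 2)‖ ≤ M / 2 * |x - x₀| ^ 2 := by
    intro t ht
    have hxt : |x - t| ≤ |x - x₀| := abs_sub_right_of_mem_uIcc ht
    rw [Real.norm_eq_abs, abs_neg, abs_div, abs_mul, abs_two, abs_pow]
    calc |iteratedDeriv 3 f t| * |x - t| ^ 2 / 2 ≤ M * |x - x₀| ^ 2 / 2 := by
          gcongr
          · exact (abs_nonneg _).trans (hM t ht)
          · exact hM t ht
      _ = M / 2 * |x - x₀| ^ 2 := by ring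
  have := (convex_uIcc x₀ x).norm_image_sub_le_of_norm_hasDerivWithin_le
    (fun t _ => (hasDerivAt_taylorTwoRemainder_base hf x t).hasDerivWithinAt) hderiv_le
    right_mem_uIcc left_mem_uIcc
  simpa [taylorTwoRemainder, abs_sub_comm x₀ x, pow_succ, mul_assoc] using this

lemma exists_abs_taylorTwoRemainder_le {f : ℝ → ℝ} (hf : ContDiff ℝ 3 f) (a b : ℝ) :
    ∃ M, 0 ≤ M ∧ ∀ x₀ ∈ Icc a b, ∀ x ∈ Icc a b,
      |taylorTwoRemainder f x₀ x| ≤ M * |x - x₀| ^ 3 := by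
  obtain ⟨K, hK⟩ := isCompact_Icc.exists_bound_of_continuousOn
    (hf.continuous_iteratedDeriv 3 le_rfl).continuousOn (s := Icc a b)
  refine ⟨max K 0 / 2, by positivity, fun x₀ hx₀ x hx => abs_taylorTwoRemainder_le hf ?_⟩
  exact fun t ht => (hK t (uIcc_subset_Icc hx₀ hx ht)).trans (le_max_left K 0)

lemma corrected_second_difference_sub_eq (up um : ℝ → ℝ) {h : ℝ} (hh : h ≠ 0) (ξ x : ℝ) :
    (um (x + h) + up (x - h) - 2 * up x) / h ^ 2 +
        (1 / h ^ 2) * ((up ξ - um ξ) + (deriv up ξ - deriv um ξ) * (x + h - ξ) +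
          (1 / 2) * (deriv (deriv up) ξ - deriv (deriv um) ξ) * (x + h - ξ) ^ 2) -
      deriv (deriv up) x =
    (taylorTwoRemainder up x (x + h) + taylorTwoRemainder up x (x - h) +
      taylorTwoRemainder um ξ (x + h) - taylorTwoRemainder up ξ (x + h)) / h ^ 2 := by
  unfold taylorTwoRemainder
  field_simp
  ring

/-- One-dimensional correction lemma of the KFBI method: if the interface point
`ξ` separates the node `x` (on the `+` side together with `x − h`) from the
neighbor `x + h` (on the `−` side), then the central second-difference quotient,
corrected with the jump terms of `u`, `u'`, `u''` at `ξ`, approximates `(u⁺)''(x)`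
with first-order accuracy. -/
theorem stmt14 (ξ : ℝ) (up um : ℝ → ℝ) (hup : ContDiff ℝ 3 up) (hum : ContDiff ℝ 3 um) :
    ∃ C : ℝ, 0 < C ∧ ∃ h₀ : ℝ, 0 < h₀ ∧
      ∀ h : ℝ, 0 < h → h ≤ h₀ →
        ∀ x ∈ Set.Icc (ξ - 1) ξ, ξ < x + h →
          |(um (x + h) + up (x - h) - 2 * up x) / h ^ 2 +
              (1 / h ^ 2) *
                ((up ξ - um ξ) + (deriv up ξ - deriv um ξ) * (x + h - ξ) +
                  (1 / 2) * (deriv (deriv up) ξ - deriv (deriv um) ξ) * (x + h - ξ) ^ 2) -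
              deriv (deriv up) x| ≤ C * h := by
  obtain ⟨Mp, hMp0, hMp⟩ := exists_abs_taylorTwoRemainder_le hup (ξ - 2) (ξ + 1)
  obtain ⟨Mm, hMm0, hMm⟩ := exists_abs_taylorTwoRemainder_le hum (ξ - 2) (ξ + 1)
  refine ⟨3 * Mp + Mm + 1, by positivity, 1, one_pos, fun h hh hh1 x ⟨hx₁, hx₂⟩ hξ => ?_⟩
  have remainder_le_of_dist_le {f M x₀ y} (hR : |taylorTwoRemainder f x₀ y| ≤ M * |y - x₀| ^ 3)
      (hM : 0 ≤ M) (hy : |y - x₀| ≤ h) : |taylorTwoRemainder f x₀ y| ≤ M * h ^ 3 :=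
    hR.trans (by gcongr)
  have hx : x ∈ Icc (ξ - 2) (ξ + 1) := ⟨by linarith, by linarith⟩
  have hxh : x + h ∈ Icc (ξ - 2) (ξ + 1) := ⟨by linarith, by linarith⟩
  have hξ' : ξ ∈ Icc (ξ - 2) (ξ + 1) := ⟨by linarith, by linarith⟩
  have hdist : |x + h - ξ| ≤ h := abs_le.2 ⟨by linarith, by linarith⟩
  have h₁ := remainder_le_of_dist_le (hMp x hx (x + h) hxh) hMp0 (by simp [abs_of_pos hh])
  have h₂ := remainder_le_of_dist_le (hMp x hx (x - h) ⟨by linarith, by linarith⟩) hMp0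
    (by simp [abs_of_pos hh])
  have h₃ := remainder_le_of_dist_le (hMm ξ hξ' (x + h) hxh) hMm0 hdist
  have h₄ := remainder_le_of_dist_le (hMp ξ hξ' (x + h) hxh) hMp0 hdist
  rw [corrected_second_difference_sub_eq up um hh.ne', abs_div, abs_of_pos (pow_pos hh 2),
    div_le_iff₀ (pow_pos hh 2)]
  calc _ ≤ |taylorTwoRemainder up x (x + h)| + |taylorTwoRemainder up x (x - h)| +
        |taylorTwoRemainder um ξ (x + h)| + |taylorTwoRemainder up ξ (x + h)| :=
        (abs_sub _ _).trans (by gcongr; exact abs_add_three _ _ _)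
    _ ≤ (3 * Mp + Mm) * h ^ 3 := by linarith
    _ ≤ (3 * Mp + Mm + 1) * h * h ^ 2 := by nlinarith [pow_pos hh 3]
end

section
/- Let v ≥ 0 and w ≥ 0 be real numbers, τ > 0, and let a, b ∈ ℂ satisfy b + (iτ/2)·(v + w·|b|²)·b = a − (iτ/2)·(v + w·|a|²)·a. Then |b| = |a|. -/
/-! Writing `β(r) = τ/2 · (v + w r²)`, the scheme factors as `b (1 + iβ(|b|)) = a (1 − iβ(|a|))`.
The two factors `1 ± iβ` have the same modulus `√(1 + β²)`, so `φ(|b|) = φ(|a|)` for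
`φ(r) = r √(1 + β(r)²)`; since `v, w ≥ 0`, `β(r)²` is nondecreasing on `r ≥ 0`, hence `φ` is
strictly increasing there and `|b| = |a|`. -/

open Complex Set

lemma Complex.norm_one_add_I_mul_ofReal (x : ℝ) : ‖1 + I * x‖ = √(1 + x ^ 2) := by
  simpa [mul_comm I] using norm_add_mul_I 1 x

lemma Complex.norm_one_sub_I_mul_ofReal (x : ℝ) : ‖1 - I * x‖ = √(1 + x ^ 2) := by
  simpa [sub_eq_add_neg, ← mul_neg] using norm_one_add_I_mul_ofReal (-x)

lemma strictMonoOn_mul_sqrt_one_add_sq {v w : ℝ} (hv : 0 ≤ v) (hw : 0 ≤ w) (c : ℝ) :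
    StrictMonoOn (fun r : ℝ => r * √(1 + (c * (v + w * r ^ 2)) ^ 2)) (Ici 0) := by
  intro r (hr : 0 ≤ r) s _ hrs
  have hβ : (c * (v + w * r ^ 2)) ^ 2 ≤ (c * (v + w * s ^ 2)) ^ 2 := by
    simp only [mul_pow]
    gcongr
  calc r * √(1 + (c * (v + w * r ^ 2)) ^ 2) < s * √(1 + (c * (v + w * r ^ 2)) ^ 2) :=
        mul_lt_mul_of_pos_right hrs (by positivity)
    _ ≤ s * √(1 + (c * (v + w * s ^ 2)) ^ 2) := by gcongr

theorem stmt17_general (v w τ : ℝ) (hv : 0 ≤ v) (hw : 0 ≤ w) (a b : ℂ)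
    (h : b + Complex.I * (τ : ℂ) / 2 * ((v : ℂ) + (w : ℂ) * ((‖b‖ : ℝ) : ℂ) ^ 2) * b =
         a - Complex.I * (τ : ℂ) / 2 * ((v : ℂ) + (w : ℂ) * ((‖a‖ : ℝ) : ℂ) ^ 2) * a) :
    ‖b‖ = ‖a‖ := by
  have hfactor : b * (1 + I * ((τ / 2 * (v + w * ‖b‖ ^ 2) : ℝ) : ℂ)) =
      a * (1 - I * ((τ / 2 * (v + w * ‖a‖ ^ 2) : ℝ) : ℂ)) := by
    push_cast
    linear_combination h
  have hnorm := congrArg norm hfactor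
  rw [norm_mul, norm_mul, norm_one_add_I_mul_ofReal, norm_one_sub_I_mul_ofReal] at hnorm
  exact (strictMonoOn_mul_sqrt_one_add_sq hv hw (τ / 2)).injOn (norm_nonneg b) (norm_nonneg a)
    hnorm

/-- Modulus conservation of the Crank–Nicolson discretization of the nonlinear
substep of the Strang splitting for the nonlinear Schrödinger equation:
if `b + (iτ/2)(v + w|b|²)b = a − (iτ/2)(v + w|a|²)a` with `v, w ≥ 0` and `τ > 0`,
then `|b| = |a|`. -/
theorem stmt17 (v w τ : ℝ) (hv : 0 ≤ v) (hw : 0 ≤ w) (hτ : 0 < τ) (a b : ℂ)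
    (h : b + Complex.I * (τ : ℂ) / 2 * ((v : ℂ) + (w : ℂ) * ((‖b‖ : ℝ) : ℂ) ^ 2) * b =
         a - Complex.I * (τ : ℂ) / 2 * ((v : ℂ) + (w : ℂ) * ((‖a‖ : ℝ) : ℂ) ^ 2) * a) :
    ‖b‖ = ‖a‖ :=
  stmt17_general v w τ hv hw a b h
end
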